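/- arXiv:2605.25065 — 5 statements merged into one kernel-verified Lean document; each statement's English description precedes it below -/
import Mathlib

section
/- If a sequence (a_n) of positive reals satisfies (i)' n·a_{n-1} = O(a_n) as n → ∞, and (ii)' for all but finitely many n, the map k ↦ a_k a_{n-k} is decreasing on the range 0 ≤ k < n/2, then (a_n) is gargantuan, i.e., a_{n-1}/a_n → 0 and for each fixed r ≥ 0 one has ∑_{k=r}^{n-r} a_k a_{n-k} = O(a_{n-r}). -/
/-!
Write `C` for the constant in `n * a (n - 1) ≤ C * a n`. For `r < k < n - r` every term
`a k * a (n - k)` of the convolution sum is at most `2 * C * a (r + 1) * a (n - r) / n`: below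
the middle, monotonicity bounds it by `a (r + 1) * a (n - r - 1)`, and the growth condition at
`n - r` trades `a (n - r - 1)` for `C * a (n - r) / (n - r)`; above the middle use the symmetry
`k ↔ n - k`. The middle term `a m * a m` of `n = 2 * m` is compared instead with
`a m * a (m + 1)`, using the growth condition at `m + 1` and monotonicity for `n + 1`.
Hence the at most `n` inner terms contribute `O(a (n - r))`, as do the two end terms.
-/

open Filter Finset

/-- A sequence is *gargantuan* if `a (n-1) / a n → 0` and, for every `r`,
`∑_{k=r}^{n-r} |a k * a (n-k)| = O(|a (n-r)|)`. -/
def Gargantuan (a : ℕ → ℝ) : Prop :=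
  Filter.Tendsto (fun n => a (n - 1) / a n) Filter.atTop (nhds 0) ∧
  ∀ r : ℕ, (fun n => ∑ k ∈ Finset.Icc r (n - r), |a k * a (n - k)|)
      =O[Filter.atTop] fun n => |a (n - r)|

open Asymptotics

def HalfProductAntitone (a : ℕ → ℝ) (n : ℕ) : Prop :=
  ∀ j k : ℕ, j ≤ k → 2 * k < n → a k * a (n - k) ≤ a j * a (n - j)

theorem exists_natCast_mul_pred_le_of_isBigO {a : ℕ → ℝ} (hnonneg : ∀ n, 0 ≤ a n)
    (h : (fun n : ℕ => (n : ℝ) * a (n - 1)) =O[atTop] a) :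
    ∃ C, 0 ≤ C ∧ ∃ N, ∀ n : ℕ, N ≤ n → (n : ℝ) * a (n - 1) ≤ C * a n := by
  obtain ⟨C, hC0, hC⟩ := h.exists_nonneg
  obtain ⟨N, hN⟩ := eventually_atTop.1 hC.bound
  refine ⟨C, hC0, N, fun n hn => ?_⟩
  have := hN n hn
  rw [Real.norm_of_nonneg (hnonneg n)] at this
  exact (le_abs_self _).trans this

section

variable {a : ℕ → ℝ} {C : ℝ} {N : ℕ}

theorem tendsto_pred_div_of_natCast_mul_pred_le (hpos : ∀ n, 0 < a n)
    (hC : ∀ n : ℕ, N ≤ n → (n : ℝ) * a (n - 1) ≤ C * a n) :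
    Tendsto (fun n => a (n - 1) / a n) atTop (nhds 0) := by
  refine squeeze_zero' (Eventually.of_forall fun n => div_nonneg (hpos _).le (hpos n).le) ?_
    (tendsto_const_div_atTop_nhds_zero_nat C)
  filter_upwards [eventually_ge_atTop (max N 1)] with n hn
  have hn0 : (0 : ℝ) < n := by exact_mod_cast (le_of_max_le_right hn)
  rw [div_le_div_iff₀ (hpos n) hn0, mul_comm]
  exact hC n (le_of_max_le_left hn)

variable (hpos : ∀ n, 0 < a n) (hC : ∀ n : ℕ, N ≤ n → (n : ℝ) * a (n - 1) ≤ C * a n)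
include hpos hC

theorem natCast_mul_mul_sub_le_of_two_mul_lt {n r k : ℕ} (hmono : HalfProductAntitone a n)
    (hn : 2 * (N + r) < n) (hrk : r < k) (hk : 2 * k < n) :
    (n : ℝ) * (a k * a (n - k)) ≤ 2 * C * (a (r + 1) * a (n - r)) := by
  have hprod : a k * a (n - k) ≤ a (r + 1) * a (n - (r + 1)) := hmono (r + 1) k hrk hk
  have hgrowth : ((n - r : ℕ) : ℝ) * a (n - (r + 1)) ≤ C * a (n - r) := by
    simpa [Nat.sub_sub] using hC (n - r) (by omega)
  have hhalf : (n : ℝ) ≤ 2 * ((n - r : ℕ) : ℝ) := by exact_mod_cast (by omega : n ≤ 2 * (n - r))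
  have := mul_pos (hpos k) (hpos (n - k))
  have := hpos (r + 1)
  have := hpos (n - (r + 1))
  calc (n : ℝ) * (a k * a (n - k))
      ≤ 2 * ((n - r : ℕ) : ℝ) * (a (r + 1) * a (n - (r + 1))) := by gcongr
    _ = 2 * a (r + 1) * (((n - r : ℕ) : ℝ) * a (n - (r + 1))) := by ring
    _ ≤ 2 * a (r + 1) * (C * a (n - r)) := by gcongr
    _ = 2 * C * (a (r + 1) * a (n - r)) := by ring

theorem natCast_mul_mul_self_le (hC0 : 0 ≤ C) {m r : ℕ}
    (hmono : HalfProductAntitone a (2 * m + 1)) (hm : N ≤ m + 1) (hrm : r < m) :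
    ((2 * m : ℕ) : ℝ) * (a m * a m) ≤ 2 * C * (a (r + 1) * a (2 * m - r)) := by
  have hprod : a m * a (m + 1) ≤ a (r + 1) * a (2 * m - r) := by
    have := hmono (r + 1) m hrm (by omega)
    rwa [show 2 * m + 1 - m = m + 1 by omega, show 2 * m + 1 - (r + 1) = 2 * m - r by omega]
      at this
  have hgrowth : ((m + 1 : ℕ) : ℝ) * a m ≤ C * a (m + 1) := by simpa using hC (m + 1) hm
  have := hpos m
  calc ((2 * m : ℕ) : ℝ) * (a m * a m) ≤ 2 * (((m + 1 : ℕ) : ℝ) * a m) * a m := by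
        push_cast; nlinarith
    _ ≤ 2 * (C * a (m + 1)) * a m := by gcongr
    _ = 2 * C * (a m * a (m + 1)) := by ring
    _ ≤ 2 * C * (a (r + 1) * a (2 * m - r)) := by gcongr

theorem natCast_mul_mul_sub_le (hC0 : 0 ≤ C) {n r k : ℕ} (hmono : HalfProductAntitone a n)
    (hmono' : HalfProductAntitone a (n + 1)) (hn : 2 * (N + r) < n) (hrk : r < k)
    (hkn : k + r < n) :
    (n : ℝ) * (a k * a (n - k)) ≤ 2 * C * (a (r + 1) * a (n - r)) := by
  rcases lt_trichotomy (2 * k) n with hk | rfl | hk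
  · exact natCast_mul_mul_sub_le_of_two_mul_lt hpos hC hmono hn hrk hk
  · rw [show 2 * k - k = k by omega]
    exact natCast_mul_mul_self_le hpos hC hC0 hmono' (by omega) hrk
  · have := natCast_mul_mul_sub_le_of_two_mul_lt hpos hC hmono hn (k := n - k)
      (by omega) (by omega)
    rwa [Nat.sub_sub_self (by omega), mul_comm (a (n - k))] at this

theorem sum_Icc_mul_sub_le (hC0 : 0 ≤ C) {n r : ℕ} (hmono : HalfProductAntitone a n)
    (hmono' : HalfProductAntitone a (n + 1)) (hn : 2 * (N + r) < n) :
    ∑ k ∈ Icc r (n - r), a k * a (n - k) ≤ (2 * a r + 2 * C * a (r + 1)) * a (n - r) := by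
  have hn0 : (0 : ℝ) < n := by exact_mod_cast (by omega : 0 < n)
  have hinner : ∑ k ∈ Ioo r (n - r), a k * a (n - k) ≤ 2 * C * (a (r + 1) * a (n - r)) := by
    have := hpos (r + 1)
    have := hpos (n - r)
    calc ∑ k ∈ Ioo r (n - r), a k * a (n - k)
        ≤ ∑ _k ∈ Ioo r (n - r), 2 * C * (a (r + 1) * a (n - r)) / n := by
          refine sum_le_sum fun k hk => ?_
          rw [mem_Ioo] at hk
          rw [le_div_iff₀ hn0, mul_comm]
          exact natCast_mul_mul_sub_le hpos hC hC0 hmono hmono' hn hk.1 (by omega)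
      _ = #(Ioo r (n - r)) * (2 * C * (a (r + 1) * a (n - r)) / n) := by
          rw [sum_const, nsmul_eq_mul]
      _ ≤ n * (2 * C * (a (r + 1) * a (n - r)) / n) := by
          gcongr
          exact_mod_cast (Nat.card_Ioo r (n - r)).trans_le (by omega)
      _ = 2 * C * (a (r + 1) * a (n - r)) := mul_div_cancel₀ _ hn0.ne'
  rw [Icc_eq_cons_Ioc (by omega), sum_cons, Ioc_eq_cons_Ioo (by omega), sum_cons,
    Nat.sub_sub_self (by omega)]
  linarith

end

/-- Sufficient conditions for a positive sequence to be gargantuan: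
(i)' `n * a (n-1) = O(a n)`; (ii)' for all but finitely many `n`, the map
`k ↦ a k * a (n-k)` is decreasing on `0 ≤ k < n/2`. -/
theorem gargantuan_of_sufficient_conditions (a : ℕ → ℝ) (hpos : ∀ n, 0 < a n)
    (h1 : (fun n : ℕ => (n : ℝ) * a (n - 1)) =O[atTop] fun n => a n)
    (h2 : ∀ᶠ n : ℕ in atTop, ∀ j k : ℕ, j ≤ k → 2 * k < n →
      a k * a (n - k) ≤ a j * a (n - j)) :
    Gargantuan a := by
  obtain ⟨C, hC0, N, hC⟩ := exists_natCast_mul_pred_le_of_isBigO (fun n => (hpos n).le) h1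
  obtain ⟨M, hM⟩ := eventually_atTop.1 h2
  refine ⟨tendsto_pred_div_of_natCast_mul_pred_le hpos hC, fun r => ?_⟩
  refine IsBigO.of_bound (2 * a r + 2 * C * a (r + 1)) ?_
  filter_upwards [eventually_gt_atTop (2 * (N + r) + M)] with n hn
  have hterm : ∀ k, |a k * a (n - k)| = a k * a (n - k) :=
    fun k => abs_of_pos (mul_pos (hpos k) (hpos _))
  simp only [hterm, Real.norm_eq_abs, abs_of_pos (hpos _)]
  rw [abs_of_nonneg (sum_nonneg fun k _ => (mul_pos (hpos k) (hpos _)).le)]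
  exact sum_Icc_mul_sub_le hpos hC hC0 (hM n (by omega)) (hM (n + 1) (by omega)) (by omega)
end

section
/- The sequence a_n = (ρ+1)^{n(n-1)/2}/n! is gargantuan for every real ρ > 0; that is, a_{n-1}/a_n → 0 as n → ∞, and for every nonnegative integer r, ∑_{k=r}^{n-r} a_k a_{n-k} = O(a_{n-r}) as n → ∞. -/
open Filter Finset Nat

/-!
Write `a n = q^C(n,2) / n!` with `q = ρ + 1 > 1`. Then `a (n-1) / a n = n / q^(n-1) → 0`, and
`a k * a (n-k) = a n * C(n,k) / q^(k(n-k))`. For `k = r + d₁`, `n - k = r + d₂` with `d₁ ≤ d₂`,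
comparing with `k = r` costs a factor `C(n,k) / C(n,r) ≤ n^d₁` and gains `q^(d₁d₂) ≥ √q^((n-2r)d₁)`,
so the term is at most `a r * a (n-r) * u^d₁` with `u = n / √q^(n-2r) → 0`. Once `u ≤ 1/2` the
convolution sum is dominated by two geometric series, giving the bound `4 a r * a (n-r)`.
-/

theorem Nat.choose_two_add (k m : ℕ) :
    (k + m).choose 2 = k.choose 2 + m.choose 2 + k * m := by
  induction m with
  | zero => simp
  | succ m ih =>
    rw [← Nat.add_assoc, Nat.choose_succ_succ', ih, Nat.choose_succ_succ' m]
    simp only [Nat.choose_one_right]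
    ring

theorem Nat.choose_add_le_choose_mul_pow (n r j : ℕ) : n.choose (r + j) ≤ n.choose r * n ^ j := by
  induction j with
  | zero => simp
  | succ j ih =>
    calc n.choose (r + j + 1) ≤ n.choose (r + j + 1) * (r + j + 1) :=
          Nat.le_mul_of_pos_right _ (Nat.succ_pos _)
      _ = n.choose (r + j) * (n - (r + j)) := Nat.choose_succ_right_eq n (r + j)
      _ ≤ n.choose r * n ^ j * n := Nat.mul_le_mul ih (Nat.sub_le n _)
      _ = n.choose r * n ^ (j + 1) := by ring

theorem sum_range_pow_add_pow_sub_le_four {u : ℝ} (hu₀ : 0 ≤ u) (hu : u ≤ 1 / 2) (N : ℕ) :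
    ∑ i ∈ range (N + 1), (u ^ i + u ^ (N - i)) ≤ 4 := by
  have hgeom : ∑ i ∈ range (N + 1), u ^ i ≤ 2 :=
    (sum_le_sum fun i _ => pow_le_pow_left₀ hu₀ hu i).trans (sum_geometric_two_le _)
  have hreflect : ∑ i ∈ range (N + 1), u ^ (N - i) = ∑ i ∈ range (N + 1), u ^ i := by
    simpa using sum_range_reflect (fun i => u ^ i) (N + 1)
  rw [sum_add_distrib, hreflect]
  linarith

theorem tendsto_natCast_div_pow_sub {c : ℝ} (hc : 1 < c) (m : ℕ) :
    Tendsto (fun n : ℕ => (n : ℝ) / c ^ (n - m)) atTop (nhds 0) := by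
  have h := (tendsto_pow_const_div_const_pow_of_one_lt 1 hc).const_mul (c ^ m)
  rw [mul_zero] at h
  refine h.congr' ?_
  filter_upwards [eventually_ge_atTop m] with n hn
  obtain ⟨k, rfl⟩ := Nat.exists_eq_add_of_le hn
  have : c ^ k ≠ 0 := by positivity
  rw [Nat.add_sub_cancel_left, pow_one, pow_add]
  field_simp

noncomputable def erdosRenyiSeq (q : ℝ) (n : ℕ) : ℝ := q ^ n.choose 2 / n !

section erdosRenyiSeq

variable {q : ℝ}

theorem erdosRenyiSeq_pos (hq : 0 < q) (n : ℕ) : 0 < erdosRenyiSeq q n := by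
  unfold erdosRenyiSeq
  positivity

theorem erdosRenyiSeq_div_erdosRenyiSeq_succ (hq : q ≠ 0) (n : ℕ) :
    erdosRenyiSeq q n / erdosRenyiSeq q (n + 1) = (n + 1) / q ^ n := by
  simp only [erdosRenyiSeq, Nat.choose_two_add n 1, factorial_succ, pow_add]
  push_cast
  field_simp
  simp

theorem erdosRenyiSeq_mul (hq : q ≠ 0) (i j : ℕ) :
    erdosRenyiSeq q i * erdosRenyiSeq q j =
      erdosRenyiSeq q (i + j) * (i + j).choose i / q ^ (i * j) := by
  have hfac : ((i + j).choose i : ℝ) * i ! * j ! = (i + j)! := by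
    rw [Nat.choose_symm_add]
    exact_mod_cast Nat.add_choose_mul_factorial_mul_factorial i j
  have hchoose : ((i + j).choose i : ℝ) ≠ 0 :=
    Nat.cast_ne_zero.2 (Nat.choose_pos (Nat.le_add_right i j)).ne'
  simp only [erdosRenyiSeq, Nat.choose_two_add, pow_add, ← hfac]
  field_simp

theorem tendsto_erdosRenyiSeq_pred_div (hq : 1 < q) :
    Tendsto (fun n => erdosRenyiSeq q (n - 1) / erdosRenyiSeq q n) atTop (nhds 0) := by
  have h := (tendsto_pow_const_div_const_pow_of_one_lt 1 hq).const_mul q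
  rw [mul_zero] at h
  refine h.congr' ?_
  filter_upwards [eventually_ge_atTop 1] with n hn
  obtain ⟨m, rfl⟩ := Nat.exists_eq_add_of_le' hn
  have : q ≠ 0 := by positivity
  rw [Nat.add_sub_cancel, erdosRenyiSeq_div_erdosRenyiSeq_succ this]
  push_cast
  field_simp
  ring

/-- With `n = 2r + d₁ + d₂`, `C(n, r + d₁) ≤ C(n, r) n^d₁`, while the exponent `(r+d₁)(r+d₂)`
exceeds `r(n-r)` by `d₁d₂ ≥ d₁(d₁+d₂)/2`; the halving is why `q` is written as `c²`. -/
theorem erdosRenyiSeq_mul_le_of_le {c : ℝ} (hc : 1 ≤ c) (r : ℕ) {d₁ d₂ : ℕ} (hd : d₁ ≤ d₂) :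
    erdosRenyiSeq (c ^ 2) (r + d₁) * erdosRenyiSeq (c ^ 2) (r + d₂) ≤
      erdosRenyiSeq (c ^ 2) r * erdosRenyiSeq (c ^ 2) (r + d₁ + d₂) *
        ((2 * r + d₁ + d₂ : ℕ) / c ^ (d₁ + d₂)) ^ d₁ := by
  set n := 2 * r + d₁ + d₂
  have hc₀ : c ≠ 0 := by positivity
  have hchoose : (n.choose (r + d₁) : ℝ) ≤ n.choose r * n ^ d₁ := by
    exact_mod_cast Nat.choose_add_le_choose_mul_pow n r d₁
  have hpow : c ^ ((d₁ + d₂) * d₁) ≤ (c ^ 2) ^ (d₁ * d₂) := by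
    rw [← pow_mul]
    exact pow_le_pow_right₀ hc (by nlinarith)
  have hexp : (r + d₁) * (r + d₂) = r * (r + d₁ + d₂) + d₁ * d₂ := by ring
  rw [erdosRenyiSeq_mul (by positivity), erdosRenyiSeq_mul (by positivity),
    show r + d₁ + (r + d₂) = n by omega, show r + (r + d₁ + d₂) = n by omega, hexp, pow_add,
    div_pow, ← pow_mul c (d₁ + d₂) d₁, ]
  rw [_root_.div_mul_div_comm, mul_assoc]
  have ha := (erdosRenyiSeq_pos (by positivity : (0 : ℝ) < c ^ 2) n).le
  gcongr

theorem erdosRenyiSeq_mul_le {c : ℝ} (hc : 1 ≤ c) (r d₁ d₂ : ℕ) :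
    erdosRenyiSeq (c ^ 2) (r + d₁) * erdosRenyiSeq (c ^ 2) (r + d₂) ≤
      erdosRenyiSeq (c ^ 2) r * erdosRenyiSeq (c ^ 2) (r + d₁ + d₂) *
        (((2 * r + d₁ + d₂ : ℕ) / c ^ (d₁ + d₂)) ^ d₁ +
          ((2 * r + d₁ + d₂ : ℕ) / c ^ (d₁ + d₂)) ^ d₂) := by
  have hq : (0 : ℝ) < c ^ 2 := by positivity
  have hprod := mul_pos (erdosRenyiSeq_pos hq r) (erdosRenyiSeq_pos hq (r + d₁ + d₂))
  rcases le_total d₁ d₂ with hd | hd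
  · refine (erdosRenyiSeq_mul_le_of_le hc r hd).trans ?_
    gcongr
    exact le_add_of_nonneg_right (by positivity)
  · have h := erdosRenyiSeq_mul_le_of_le hc r hd
    rw [mul_comm, add_right_comm r, add_right_comm (2 * r), add_comm d₂] at h
    refine h.trans ?_
    gcongr
    exact le_add_of_nonneg_left (by positivity)

theorem sum_erdosRenyiSeq_mul_le {c : ℝ} (hc : 1 ≤ c) {r n : ℕ} (hn : 2 * r ≤ n)
    (hu : (n : ℝ) / c ^ (n - 2 * r) ≤ 1 / 2) :
    ∑ k ∈ Icc r (n - r), erdosRenyiSeq (c ^ 2) k * erdosRenyiSeq (c ^ 2) (n - k) ≤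
      4 * (erdosRenyiSeq (c ^ 2) r * erdosRenyiSeq (c ^ 2) (n - r)) := by
  obtain ⟨N, rfl⟩ := Nat.exists_eq_add_of_le hn
  set a := erdosRenyiSeq (c ^ 2)
  set u : ℝ := ((2 * r + N : ℕ) : ℝ) / c ^ N
  rw [Nat.add_sub_cancel_left] at hu
  have hreindex : ∑ k ∈ Icc r (2 * r + N - r), a k * a (2 * r + N - k) =
      ∑ i ∈ range (N + 1), a (r + i) * a (r + (N - i)) := by
    have h := sum_Ico_add (fun k => a k * a (2 * r + N - k)) 0 (N + 1) r
    rw [zero_add, ← range_eq_Ico, show N + 1 + r = 2 * r + N - r + 1 by omega,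
      Ico_add_one_right_eq_Icc] at h
    rw [← h]
    refine sum_congr rfl fun i hi => ?_
    have := mem_range.1 hi
    congr 2
    omega
  have hterm : ∀ i ∈ range (N + 1),
      a (r + i) * a (r + (N - i)) ≤ a r * a (r + N) * (u ^ i + u ^ (N - i)) := by
    intro i hi
    have hiN : i + (N - i) = N := Nat.add_sub_cancel' (Nat.lt_succ_iff.1 (mem_range.1 hi))
    have h := erdosRenyiSeq_mul_le hc r i (N - i)
    rwa [add_assoc r, add_assoc (2 * r), hiN] at h
  have hprod := mul_pos (erdosRenyiSeq_pos (by positivity : (0 : ℝ) < c ^ 2) r)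
    (erdosRenyiSeq_pos (by positivity : (0 : ℝ) < c ^ 2) (r + N))
  calc ∑ k ∈ Icc r (2 * r + N - r), a k * a (2 * r + N - k)
      = ∑ i ∈ range (N + 1), a (r + i) * a (r + (N - i)) := hreindex
    _ ≤ ∑ i ∈ range (N + 1), a r * a (r + N) * (u ^ i + u ^ (N - i)) := sum_le_sum hterm
    _ = a r * a (r + N) * ∑ i ∈ range (N + 1), (u ^ i + u ^ (N - i)) := (mul_sum ..).symm
    _ ≤ a r * a (r + N) * 4 := by
      gcongr
      exact sum_range_pow_add_pow_sub_le_four (by positivity) hu N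
    _ = 4 * (a r * a (2 * r + N - r)) := by
      rw [show 2 * r + N - r = r + N by omega, mul_comm]

end erdosRenyiSeq

theorem gargantuan_erdosRenyiSeq {q : ℝ} (hq : 1 < q) : Gargantuan (erdosRenyiSeq q) := by
  refine ⟨tendsto_erdosRenyiSeq_pred_div hq, fun r => ?_⟩
  obtain ⟨c, hc, rfl⟩ : ∃ c, 1 < c ∧ q = c ^ 2 :=
    ⟨√q, Real.lt_sqrt zero_le_one |>.2 (by simpa), (Real.sq_sqrt (by positivity)).symm⟩
  have hpos := erdosRenyiSeq_pos (by positivity : (0 : ℝ) < c ^ 2)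
  refine Asymptotics.IsBigO.of_bound (4 * erdosRenyiSeq (c ^ 2) r) ?_
  filter_upwards [eventually_ge_atTop (2 * r),
    (tendsto_natCast_div_pow_sub hc (2 * r)).eventually_le_const (by norm_num : (0 : ℝ) < 1 / 2)]
    with n hn hu
  simp only [Real.norm_eq_abs, abs_mul, abs_of_pos, hpos]
  rw [abs_of_nonneg (sum_nonneg fun k _ => (mul_pos (hpos k) (hpos _)).le), mul_assoc]
  exact sum_erdosRenyiSeq_mul_le hc.le hn hu

/-- The sequence `(ρ+1)^(n(n-1)/2) / n!` of normalized total weights of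
edge-weighted graphs is gargantuan for every `ρ > 0`. -/
theorem gargantuan_erdos_renyi (ρ : ℝ) (hρ : 0 < ρ) :
    Gargantuan (fun n => (ρ + 1) ^ (n * (n - 1) / 2) / (n ! : ℝ)) := by
  simp_rw [← Nat.choose_two_right]
  exact gargantuan_erdosRenyiSeq (by linarith)
end

section
/- The sequence a_n = ((2n-1)!!)^2 / n! is gargantuan; that is, a_{n-1}/a_n → 0 as n → ∞, and for every nonnegative integer r, ∑_{k=r}^{n-r} a_k a_{n-k} = O(a_{n-r}) as n → ∞. -/
/-!
The ratio `a (n + 1) / a n = (2n + 1)² / (n + 1)` of `a n = ((2n - 1)‼)² / n!` is nondecreasing and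
at least `n + 1`. The growth bound gives `a (n - 1) / a n ≤ 1 / n`. Monotonicity of the ratio
(log-convexity) makes `k ↦ a k * a (n - k)` decrease towards the middle, so in
`∑_{k=r}^{n-r} a k * a (n - k)` the two end terms equal `a r * a (n - r)` and each of the fewer than
`n` inner terms is at most `a (r + 1) * a (n - r - 1)`; the growth bound turns
`n * a (n - r - 1)` into `O(a (n - r))`.
-/

open Filter Finset Nat

namespace Gargantuan

variable {a : ℕ → ℝ}

theorem tendsto_pred_div (hpos : ∀ n, 0 < a n) (hgrowth : ∀ n, (n + 1) * a n ≤ a (n + 1)) :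
    Tendsto (fun n => a (n - 1) / a n) atTop (nhds 0) := by
  refine squeeze_zero' (.of_forall fun n => (div_pos (hpos _) (hpos _)).le) ?_
    tendsto_one_div_atTop_nhds_zero_nat
  filter_upwards [eventually_ge_atTop 1] with n hn
  obtain ⟨m, rfl⟩ := Nat.exists_eq_add_of_le' hn
  rw [div_le_div_iff₀ (hpos _) (by positivity)]
  simpa [mul_comm] using hgrowth m

theorem mul_succ_le_succ_mul (hpos : ∀ n, 0 < a n) (hmono : Monotone fun n => a (n + 1) / a n)
    {k m : ℕ} (hkm : k ≤ m) : a (k + 1) * a m ≤ a k * a (m + 1) := by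
  have := hmono hkm
  rw [div_le_div_iff₀ (hpos k) (hpos m)] at this
  linarith

theorem mul_sub_le_of_le (hpos : ∀ n, 0 < a n) (hmono : Monotone fun n => a (n + 1) / a n)
    {n j k : ℕ} (hjk : j ≤ k) (hkn : 2 * k ≤ n) : a k * a (n - k) ≤ a j * a (n - j) := by
  induction k, hjk using Nat.le_induction with
  | base => rfl
  | succ k hjk ih =>
    calc a (k + 1) * a (n - (k + 1)) ≤ a k * a (n - (k + 1) + 1) :=
          mul_succ_le_succ_mul hpos hmono (by omega)
      _ = a k * a (n - k) := by rw [show n - (k + 1) + 1 = n - k by omega]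
      _ ≤ a j * a (n - j) := ih (by omega)

theorem mul_sub_le_of_mem_Ioo (hpos : ∀ n, 0 < a n) (hmono : Monotone fun n => a (n + 1) / a n)
    {n r k : ℕ} (hk : k ∈ Ioo r (n - r)) :
    a k * a (n - k) ≤ a (r + 1) * a (n - (r + 1)) := by
  rw [mem_Ioo] at hk
  rcases le_or_gt (2 * k) n with hkn | hkn
  · exact mul_sub_le_of_le hpos hmono (by omega) hkn
  · calc a k * a (n - k) = a (n - k) * a (n - (n - k)) := by
          rw [mul_comm, Nat.sub_sub_self (by omega)]
      _ ≤ a (r + 1) * a (n - (r + 1)) := mul_sub_le_of_le hpos hmono (by omega) (by omega)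

theorem add_mul_le_mul_succ (hpos : ∀ n, 0 < a n) (hgrowth : ∀ n, (n + 1) * a n ≤ a (n + 1))
    (m r : ℕ) : (m + r + 1 : ℝ) * a m ≤ (r + 1) * a (m + 1) := by
  have hle : (m + r + 1 : ℝ) ≤ (r + 1) * (m + 1) := by nlinarith [(m.cast_nonneg : (0 : ℝ) ≤ m)]
  calc (m + r + 1 : ℝ) * a m ≤ (r + 1) * (m + 1) * a m :=
        mul_le_mul_of_nonneg_right hle (hpos m).le
    _ = (r + 1) * ((m + 1) * a m) := by ring
    _ ≤ (r + 1) * a (m + 1) := by gcongr; exact_mod_cast hgrowth m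

theorem sum_Icc_mul_sub_le (hpos : ∀ n, 0 < a n) (hmono : Monotone fun n => a (n + 1) / a n)
    (hgrowth : ∀ n, (n + 1) * a n ≤ a (n + 1)) {n r : ℕ} (hrn : 2 * r < n) :
    ∑ k ∈ Icc r (n - r), a k * a (n - k) ≤ (2 * a r + (r + 1) * a (r + 1)) * a (n - r) := by
  obtain ⟨m, hm⟩ : ∃ m, n - r = m + 1 := ⟨n - r - 1, by omega⟩
  have hinterior : ∑ k ∈ Ioo r (n - r), a k * a (n - k) ≤ n * (a (r + 1) * a m) := by
    calc ∑ k ∈ Ioo r (n - r), a k * a (n - k)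
        ≤ #(Ioo r (n - r)) • (a (r + 1) * a (n - (r + 1))) :=
          sum_le_card_nsmul _ _ _ fun k hk => mul_sub_le_of_mem_Ioo hpos hmono hk
      _ ≤ n * (a (r + 1) * a m) := by
          rw [nsmul_eq_mul, Nat.card_Ioo, show n - (r + 1) = m by omega]
          gcongr
          · exact (mul_pos (hpos _) (hpos _)).le
          · exact_mod_cast (show n - r - r - 1 ≤ n by omega)
  have hgrow : (n : ℝ) * a m ≤ (r + 1) * a (n - r) := by
    rw [hm, show (n : ℝ) = m + r + 1 by exact_mod_cast (show n = m + r + 1 by omega)]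
    exact add_mul_le_mul_succ hpos hgrowth m r
  rw [← add_sum_Ioc_eq_sum_Icc (by omega), ← sum_Ioo_add_eq_sum_Ioc (by omega),
    Nat.sub_sub_self (by omega)]
  nlinarith [hpos r, hpos (r + 1)]

theorem isBigO_sum (hpos : ∀ n, 0 < a n) (hmono : Monotone fun n => a (n + 1) / a n)
    (hgrowth : ∀ n, (n + 1) * a n ≤ a (n + 1)) (r : ℕ) :
    (fun n => ∑ k ∈ Icc r (n - r), |a k * a (n - k)|) =O[atTop] fun n => |a (n - r)| := by
  refine Asymptotics.IsBigO.of_bound (2 * a r + (r + 1) * a (r + 1)) ?_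
  filter_upwards [eventually_gt_atTop (2 * r)] with n hn
  have hterms : ∀ k, |a k * a (n - k)| = a k * a (n - k) :=
    fun k => abs_of_pos (mul_pos (hpos _) (hpos _))
  simp only [hterms, Real.norm_eq_abs, abs_abs]
  rw [abs_of_nonneg (sum_nonneg fun k _ => (mul_pos (hpos k) (hpos _)).le),
    abs_of_pos (hpos _)]
  exact sum_Icc_mul_sub_le hpos hmono hgrowth hn

end Gargantuan

theorem gargantuan_of_monotone_ratio {a : ℕ → ℝ} (hpos : ∀ n, 0 < a n)
    (hmono : Monotone fun n => a (n + 1) / a n) (hgrowth : ∀ n, (n + 1) * a n ≤ a (n + 1)) :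
    Gargantuan a :=
  ⟨Gargantuan.tendsto_pred_div hpos hgrowth, Gargantuan.isBigO_sum hpos hmono hgrowth⟩

-- At `n = 0` truncated subtraction gives `0‼ = 1`, matching the convention `(-1)‼ = 1`.
noncomputable def qss (n : ℕ) : ℝ := ((2 * n - 1)‼ : ℝ) ^ 2 / n !

theorem qss_pos (n : ℕ) : 0 < qss n := by
  unfold qss
  have := Nat.doubleFactorial_pos (2 * n - 1)
  positivity

theorem qss_succ (n : ℕ) : qss (n + 1) = (2 * n + 1) ^ 2 / (n + 1) * qss n := by
  have hdf : (2 * (n + 1) - 1)‼ = (2 * n + 1) * (2 * n - 1)‼ := by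
    cases n with
    | zero => rfl
    | succ m => rw [show 2 * (m + 1 + 1) - 1 = 2 * m + 1 + 2 by omega,
        Nat.doubleFactorial_add_two]; rfl
  unfold qss
  rw [hdf, Nat.factorial_succ]
  push_cast
  field_simp

theorem qss_succ_div (n : ℕ) : qss (n + 1) / qss n = (2 * n + 1) ^ 2 / (n + 1) := by
  rw [qss_succ, mul_div_cancel_right₀ _ (qss_pos n).ne']

theorem monotone_qss_succ_div : Monotone fun n => qss (n + 1) / qss n := by
  intro k m hkm
  have hkm' : (k : ℝ) ≤ m := by exact_mod_cast hkm
  simp only [qss_succ_div]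
  rw [div_le_div_iff₀ (by positivity) (by positivity)]
  have hcoef : (0 : ℝ) ≤ 4 * k * m + 4 * k + 4 * m + 3 := by positivity
  nlinarith [mul_nonneg (sub_nonneg.2 hkm') hcoef]

theorem succ_mul_qss_le (n : ℕ) : (n + 1) * qss n ≤ qss (n + 1) := by
  have hratio : (n + 1 : ℝ) ≤ (2 * n + 1) ^ 2 / (n + 1) := by
    rw [le_div_iff₀ (by positivity)]
    nlinarith [(n.cast_nonneg : (0 : ℝ) ≤ n)]
  rw [qss_succ]
  exact mul_le_mul_of_nonneg_right hratio (qss_pos n).le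

/-- The sequence `((2n-1)!!)^2 / n!` (quadratic square-tiled surfaces) is gargantuan. -/
theorem gargantuan_qss :
    Gargantuan (fun n => (((2 * n - 1)‼ : ℝ)) ^ 2 / (n ! : ℝ)) :=
  gargantuan_of_monotone_ratio qss_pos monotone_qss_succ_div succ_mul_qss_le
end

section
/- The sequence b_n = (2n-1)!! is gargantuan; that is, b_{n-1}/b_n → 0 as n → ∞, and for every nonnegative integer r, ∑_{k=r}^{n-r} b_k b_{n-k} = O(b_{n-r}) as n → ∞. -/
open Filter Finset Nat

/-!
If `b (k+1) = ρ k * b k` with `ρ` nondecreasing, then along the antidiagonal the products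
`b k * b (n-k)` decrease towards the middle `k = n/2`, since one step multiplies by
`ρ k / ρ (n-k-1) ≤ 1`. Hence in `∑_{k=r}^{n-r} b k * b (n-k)` the two end terms equal
`b r * b (n-r)`, and each of the fewer than `n` interior terms is at most the `k = r+1` term,
which is `ρ r / ρ (n-r-1)` times the end term. When `ρ` grows linearly this totals
`O(b (n-r))`, and `b (n-1) / b n = 1 / ρ (n-1) → 0`. For `(2n-1)!!` the ratio is `ρ k = 2k+1`.
-/

section MonotoneRatio

variable {b ρ : ℕ → ℝ}

lemma antidiag_mul_succ_le (hb : ∀ k, 0 ≤ b k) (hρ : Monotone ρ)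
    (hstep : ∀ k, b (k + 1) = ρ k * b k) {n k : ℕ} (hk : 2 * (k + 1) ≤ n) :
    b (k + 1) * b (n - (k + 1)) ≤ b k * b (n - k) := by
  have hnk : n - k = n - (k + 1) + 1 := by omega
  calc b (k + 1) * b (n - (k + 1)) = ρ k * (b k * b (n - (k + 1))) := by rw [hstep]; ring
    _ ≤ ρ (n - (k + 1)) * (b k * b (n - (k + 1))) :=
        mul_le_mul_of_nonneg_right (hρ (by omega)) (mul_nonneg (hb _) (hb _))
    _ = b k * b (n - k) := by rw [hnk, hstep]; ring

lemma antidiag_mul_le_of_le (hb : ∀ k, 0 ≤ b k) (hρ : Monotone ρ)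
    (hstep : ∀ k, b (k + 1) = ρ k * b k) {n j k : ℕ} (hjk : j ≤ k) (hk : 2 * k ≤ n) :
    b k * b (n - k) ≤ b j * b (n - j) := by
  induction k, hjk using Nat.le_induction with
  | base => exact le_rfl
  | succ k _ ih => exact (antidiag_mul_succ_le hb hρ hstep hk).trans (ih (by omega))

lemma antidiag_mul_le_of_mem_Ioo (hb : ∀ k, 0 ≤ b k) (hρ : Monotone ρ)
    (hstep : ∀ k, b (k + 1) = ρ k * b k) {n r k : ℕ} (hk : k ∈ Ioo r (n - r)) :
    b k * b (n - k) ≤ b (r + 1) * b (n - (r + 1)) := by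
  rw [mem_Ioo] at hk
  rcases le_or_gt (2 * k) n with hkn | hkn
  · exact antidiag_mul_le_of_le hb hρ hstep (by omega) hkn
  · have hsymm : n - (n - k) = k := by omega
    calc b k * b (n - k) = b (n - k) * b (n - (n - k)) := by rw [hsymm, mul_comm]
      _ ≤ b (r + 1) * b (n - (r + 1)) := antidiag_mul_le_of_le hb hρ hstep (by omega) (by omega)

lemma sum_Icc_antidiag_mul_le (hb : ∀ k, 0 ≤ b k) (hρ : Monotone ρ)
    (hstep : ∀ k, b (k + 1) = ρ k * b k) {c : ℝ} (hc : 0 < c) (hlin : ∀ k, c * k ≤ ρ k)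
    {n r : ℕ} (hn : 2 * r + 2 ≤ n) :
    ∑ k ∈ Icc r (n - r), b k * b (n - k) ≤ (2 + ρ r / c) * b r * b (n - r) := by
  set m := n - (r + 1)
  have hbm : b (n - r) = ρ m * b m := by rw [show n - r = m + 1 by omega, hstep]
  have hρr : 0 ≤ ρ r := (mul_nonneg hc.le r.cast_nonneg).trans (hlin r)
  have hsplit : ∑ k ∈ Icc r (n - r), b k * b (n - k)
      = 2 * (b r * b (n - r)) + ∑ k ∈ Ioo r (n - r), b k * b (n - k) := by
    rw [Icc_eq_cons_Ioc (by omega), sum_cons, Ioc_eq_cons_Ioo (by omega), sum_cons,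
      show n - (n - r) = r by omega]
    ring
  have hinterior :
      ∑ k ∈ Ioo r (n - r), b k * b (n - k) ≤ (n - r - r - 1 : ℕ) * (ρ r * b r * b m) := by
    rw [← Nat.card_Ioo, ← nsmul_eq_mul]
    refine sum_le_card_nsmul _ _ _ fun k hk => ?_
    simpa only [hstep, mul_assoc] using antidiag_mul_le_of_mem_Ioo hb hρ hstep hk
  -- the interior has fewer than `m` terms and `c * m ≤ ρ m`
  have hcount :
      ((n - r - r - 1 : ℕ) : ℝ) * (ρ r * b r * b m) ≤ ρ r / c * (b r * b (n - r)) := by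
    rw [hbm, div_mul_eq_mul_div, le_div_iff₀ hc]
    have hmr : ((n - r - r - 1 : ℕ) : ℝ) ≤ m := mod_cast (by omega : n - r - r - 1 ≤ m)
    have hcm : c * ((n - r - r - 1 : ℕ) : ℝ) ≤ ρ m :=
      (mul_le_mul_of_nonneg_left hmr hc.le).trans (hlin m)
    have hprod : 0 ≤ ρ r * b r * b m := mul_nonneg (mul_nonneg hρr (hb r)) (hb m)
    nlinarith
  linarith

theorem Gargantuan.of_monotone_ratio (hb : ∀ k, 0 < b k) (hρ : Monotone ρ)
    (hstep : ∀ k, b (k + 1) = ρ k * b k) {c : ℝ} (hc : 0 < c) (hlin : ∀ k, c * k ≤ ρ k) :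
    Gargantuan b := by
  have hb' : ∀ k, 0 ≤ b k := fun k => (hb k).le
  refine ⟨?_, fun r => ?_⟩
  · have hρ_top : Tendsto (fun n => ρ (n - 1)) atTop atTop :=
      (tendsto_atTop_mono hlin (tendsto_natCast_atTop_atTop.const_mul_atTop hc)).comp
        (tendsto_sub_atTop_nat 1)
    refine hρ_top.inv_tendsto_atTop.congr' ?_
    filter_upwards [eventually_ge_atTop 1] with n hn
    obtain ⟨k, rfl⟩ : ∃ k, n = k + 1 := ⟨n - 1, by omega⟩
    simp only [Pi.inv_apply, Nat.add_sub_cancel, hstep, div_mul_cancel_right₀ (hb k).ne']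
  · refine Asymptotics.IsBigO.of_bound ((2 + ρ r / c) * b r) ?_
    filter_upwards [eventually_ge_atTop (2 * r + 2)] with n hn
    simpa only [Real.norm_eq_abs, abs_of_nonneg (mul_nonneg (hb' _) (hb' _)),
      abs_of_nonneg (sum_nonneg fun k _ => mul_nonneg (hb' k) (hb' _)), abs_of_pos (hb _)]
      using sum_Icc_antidiag_mul_le hb' hρ hstep hc hlin hn

end MonotoneRatio

lemma doubleFactorial_two_mul_succ_sub_one (k : ℕ) :
    (2 * (k + 1) - 1)‼ = (2 * k + 1) * (2 * k - 1)‼ := by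
  rw [show 2 * (k + 1) - 1 = 2 * k + 1 by omega, doubleFactorial_add_one]

/-- The double factorial sequence `(2n-1)!!` is gargantuan. -/
theorem gargantuan_doubleFactorial :
    Gargantuan (fun n => ((2 * n - 1)‼ : ℝ)) :=
  Gargantuan.of_monotone_ratio (ρ := fun k => 2 * k + 1) (c := 2)
    (fun k => by exact_mod_cast doubleFactorial_pos _)
    (fun _ _ hij => by dsimp only; gcongr)
    (fun k => by simp only [doubleFactorial_two_mul_succ_sub_one]; push_cast; ring)
    two_pos (fun k => by linarith)
end

section
/- If two sequences of positive reals (a_n) and (b_n) are both gargantuan, then the pointwise product sequence (a_n b_n) is gargantuan. -/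
open Filter Finset Asymptotics

theorem Finset.sum_mul_le_sum_mul_sum {ι R : Type*} [Semiring R] [PartialOrder R]
    [IsOrderedRing R] (s : Finset ι) {f g : ι → R} (hf : ∀ i ∈ s, 0 ≤ f i)
    (hg : ∀ i ∈ s, 0 ≤ g i) : ∑ i ∈ s, f i * g i ≤ (∑ i ∈ s, f i) * ∑ i ∈ s, g i := by
  rw [sum_mul]
  exact sum_le_sum fun i hi => mul_le_mul_of_nonneg_left (single_le_sum hg hi) (hf i hi)

theorem sum_abs_mul_mul_le (a b : ℕ → ℝ) (s : Finset ℕ) (n : ℕ) :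
    ∑ k ∈ s, |a k * b k * (a (n - k) * b (n - k))| ≤
      (∑ k ∈ s, |a k * a (n - k)|) * ∑ k ∈ s, |b k * b (n - k)| := calc
  _ = ∑ k ∈ s, |a k * a (n - k)| * |b k * b (n - k)| :=
    sum_congr rfl fun k _ => by rw [mul_mul_mul_comm, abs_mul]
  _ ≤ _ := s.sum_mul_le_sum_mul_sum (fun _ _ => abs_nonneg _) fun _ _ => abs_nonneg _

theorem gargantuan_mul_general (a b : ℕ → ℝ)
    (ha : Gargantuan a) (hb : Gargantuan b) :
    Gargantuan (fun n => a n * b n) := by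
  refine ⟨?_, fun r => ?_⟩
  · simpa only [div_mul_div_comm, mul_zero] using ha.1.mul hb.1
  · have hconv : (fun n => ∑ k ∈ Icc r (n - r), |a k * b k * (a (n - k) * b (n - k))|) =O[atTop]
        fun n => (∑ k ∈ Icc r (n - r), |a k * a (n - k)|) * ∑ k ∈ Icc r (n - r), |b k * b (n - k)| :=
      isBigO_of_le _ fun n => by
        rw [Real.norm_of_nonneg (sum_nonneg fun _ _ => abs_nonneg _)]
        exact (sum_abs_mul_mul_le a b _ n).trans (le_abs_self _)
    simpa only [abs_mul] using hconv.trans ((ha.2 r).mul (hb.2 r))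

/-- The pointwise product of two gargantuan sequences of positive reals is gargantuan. -/
theorem gargantuan_mul (a b : ℕ → ℝ) (hapos : ∀ n, 0 < a n) (hbpos : ∀ n, 0 < b n)
    (ha : Gargantuan a) (hb : Gargantuan b) :
    Gargantuan (fun n => a n * b n) :=
  gargantuan_mul_general a b ha hb
end
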